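/- Fix p ∈ (0,1) with p ≠ 1/2, let f_n be the cluster-size function at the root of the perfect binary tree of depth n, and define ρ_{p,f_n}(s) = (Σ_{∅≠A⊆B_n} ⟨f_n,Ψ_A^{p,B_n}⟩² (1 − |A|/|B_n|)^s)/var_p(f_n). Then for any sequence of positive integers s_n: if s_n = o(|B_n|) then ρ_{p,f_n}(s_n) → 1 as n → ∞, and if s_n = ω(|B_n|) then ρ_{p,f_n}(s_n) → 0 as n → ∞. -/

import Mathlib

open Finset Filter

noncomputable section
open scoped Classical

/-- Edges on the path from the root to vertex `v`, in heap indexing of the infinite binary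
tree: the root is `0`, the children of `v` are `2v+1` and `2v+2`, and each non-root vertex
is identified with the edge joining it to its parent `(v−1)/2`. -/
def pathSet : ℕ → Finset ℕ
  | 0 => ∅
  | (v + 1) => insert (v + 1) (pathSet (v / 2))
decreasing_by exact Nat.lt_succ_of_le (Nat.div_le_self v 2)

/-- The depth of vertex `v`. -/
def depth (v : ℕ) : ℕ := Nat.log2 (v + 1)

/-- The edge set B_n of the perfect binary tree of depth `n` (its vertex set is
{0,…,2^{n+1}−2} and each non-root vertex is identified with the edge to its parent),
so |B_n| = 2^{n+1} − 2. -/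
def Eset (n : ℕ) : Finset ℕ := Finset.Icc 1 (2 ^ (n + 1) - 2)

/-- ν_p = √((1-p)/p). -/
def nu (p : ℝ) : ℝ := Real.sqrt ((1 - p) / p)

/-- Ψ_A^{p,B_n}(x) = Π_{i∈A} x_i ν_p^{x_i}: a configuration is encoded by the set `x` of
open edges; the factor is ν_p when the edge is open (+1) and −ν_p⁻¹ when closed (−1). -/
def PsiT (p : ℝ) (A x : Finset ℕ) : ℝ :=
  ∏ i ∈ A, (if i ∈ x then nu p else -(nu p)⁻¹)

/-- The Bernoulli product measure π_{p,B_n} of the configuration with open-edge set `x`. -/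
def piT (p : ℝ) (n : ℕ) (x : Finset ℕ) : ℝ :=
  p ^ x.card * (1 - p) ^ ((Eset n).card - x.card)

/-- The inner product ⟨f,g⟩_{p,B_n} = Σ_{x⊆B_n} f(x) g(x) π_{p,B_n}(x). -/
def innT (p : ℝ) (n : ℕ) (f g : Finset ℕ → ℝ) : ℝ :=
  ∑ x ∈ (Eset n).powerset, f x * g x * piT p n x

/-- The cluster-size function f_n(x) = Σ_{v∈V_n} Π_{e∈P_v} (1+x_e)/2: the number of
vertices of the depth-n perfect binary tree joined to the root by open edges. -/
def fcl (n : ℕ) (x : Finset ℕ) : ℝ :=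
  ∑ v ∈ Finset.range (2 ^ (n + 1) - 1), ∏ e ∈ pathSet v, (if e ∈ x then (1 : ℝ) else 0)

/-- var_p(f_n) = Σ_{∅≠A⊆B_n} ⟨f_n,Ψ_A⟩². -/
def varT (p : ℝ) (n : ℕ) : ℝ :=
  ∑ A ∈ (Eset n).powerset.filter (fun A => A.Nonempty), (innT p n (fcl n) (PsiT p A)) ^ 2

/-- g_{p,n}(d). -/
def gtree (p : ℝ) (n d : ℕ) : ℝ :=
  if p = 1 / 2 then ((2 : ℝ) ^ (2 * d))⁻¹ * ((n + 1 - d : ℕ) : ℝ) ^ 2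
  else p ^ (2 * d) * ((1 - (2 * p) ^ (n + 1 - d)) / (1 - 2 * p)) ^ 2

/-- The stationary autocorrelation function (spectral representation)
ρ_{p,f_n}(s) = (Σ_{∅≠A⊆B_n} ⟨f_n,Ψ_A⟩² (1 − |A|/|B_n|)^s)/var_p(f_n), |B_n| = 2^{n+1}−2. -/
def rhoT (p : ℝ) (n s : ℕ) : ℝ :=
  (∑ A ∈ (Eset n).powerset.filter (fun A => A.Nonempty),
      (innT p n (fcl n) (PsiT p A)) ^ 2 *
        (1 - (A.card : ℝ) / ((2 : ℝ) ^ (n + 1) - 2)) ^ s) / varT p n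

lemma pathSet_subset_Icc : ∀ v, pathSet v ⊆ Finset.Icc 1 v := by
  intro v
  induction v using Nat.strong_induction_on with
  | _ v ih =>
    match v with
    | 0 => simp [pathSet]
    | (v+1) =>
      rw [pathSet]
      intro a ha
      rcases Finset.mem_insert.mp ha with h | h
      · subst h; simp
      · have := ih (v / 2) (Nat.lt_succ_of_le (Nat.div_le_self v 2)) h
        rw [Finset.mem_Icc] at this ⊢
        exact ⟨this.1, this.2.trans ((Nat.div_le_self v 2).trans (Nat.le_succ v))⟩

lemma card_pathSet : ∀ v, (pathSet v).card = Nat.log2 (v + 1) := by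
  intro v
  induction v using Nat.strong_induction_on with
  | _ v ih =>
    match v with
    | 0 => simp [pathSet, Nat.log2]; rfl
    | (v+1) =>
      rw [pathSet]
      have hnm : (v+1) ∉ pathSet (v/2) := by
        intro h
        have := (Finset.mem_Icc.mp (pathSet_subset_Icc _ h)).2
        omega
      rw [Finset.card_insert_of_notMem hnm, ih (v/2) (Nat.lt_succ_of_le (Nat.div_le_self v 2))]
      have h2 : Nat.log2 (v + 1 + 1) = Nat.log2 ((v+1+1)/2) + 1 := by
        rw [Nat.log2_eq_log_two, Nat.log2_eq_log_two, Nat.log_of_one_lt_of_le (by norm_num) (by omega)]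
      rw [h2]
      congr 2
      omega

lemma mem_pathSet_iff {a v : ℕ} : a ∈ pathSet v ↔ 1 ≤ a ∧ ∃ j, (v + 1) / 2 ^ j = a + 1 := by
  induction v using Nat.strong_induction_on with
  | _ v ih =>
    match v with
    | 0 =>
      simp only [pathSet, Finset.notMem_empty, false_iff]
      rintro ⟨h1, j, hj⟩
      have h2 : (0 + 1) / 2 ^ j ≤ 1 := Nat.div_le_self 1 (2^j)
      omega
    | (v+1) =>
      rw [pathSet]
      constructor
      · intro h
        rcases Finset.mem_insert.mp h with h | h
        · subst h; exact ⟨by omega, 0, by simp⟩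
        · obtain ⟨h1, j, hj⟩ := (ih (v/2) (Nat.lt_succ_of_le (Nat.div_le_self v 2))).mp h
          refine ⟨h1, j+1, ?_⟩
          rw [pow_succ, mul_comm, ← Nat.div_div_eq_div_mul]
          have : (v + 1 + 1) / 2 = v / 2 + 1 := by omega
          rw [this]; exact hj
      · rintro ⟨h1, j, hj⟩
        match j with
        | 0 =>
          simp at hj
          exact Finset.mem_insert.mpr (Or.inl (by omega))
        | (j+1) =>
          refine Finset.mem_insert.mpr (Or.inr ?_)
          refine (ih (v/2) (Nat.lt_succ_of_le (Nat.div_le_self v 2))).mpr ⟨h1, j, ?_⟩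
          rw [pow_succ, mul_comm, ← Nat.div_div_eq_div_mul] at hj
          have : (v + 1 + 1) / 2 = v / 2 + 1 := by omega
          rw [this] at hj; exact hj

lemma self_mem_pathSet {v : ℕ} (h : 1 ≤ v) : v ∈ pathSet v := by
  match v, h with
  | (v+1), _ => rw [pathSet]; exact Finset.mem_insert_self _ _

lemma pathSet_subset_of_mem {w v : ℕ} (h : w ∈ pathSet v) : pathSet w ⊆ pathSet v := by
  intro x hx
  obtain ⟨h1, j, hj⟩ := mem_pathSet_iff.mp h
  obtain ⟨hx1, i, hi⟩ := mem_pathSet_iff.mp hx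
  exact mem_pathSet_iff.mpr ⟨hx1, j + i, by
    rw [pow_add, ← Nat.div_div_eq_div_mul, hj, hi]⟩

lemma mem_pathSet_of_le {a w v : ℕ} (ha : a ∈ pathSet v) (hw : w ∈ pathSet v) (hle : a ≤ w) :
    a ∈ pathSet w := by
  obtain ⟨ha1, i, hi⟩ := mem_pathSet_iff.mp ha
  obtain ⟨hw1, j, hj⟩ := mem_pathSet_iff.mp hw
  rcases le_or_gt j i with h | h
  · refine mem_pathSet_iff.mpr ⟨ha1, i - j, ?_⟩
    rw [← hj, Nat.div_div_eq_div_mul, ← pow_add, Nat.add_sub_cancel' h, hi]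
  · have : w + 1 ≤ a + 1 := by
      rw [← hi, ← hj]
      exact Nat.div_le_div_left (Nat.pow_le_pow_right (by norm_num) h.le) (by positivity)
    have : a = w := by omega
    subst this
    exact mem_pathSet_iff.mpr ⟨ha1, 0, by simp⟩


def TT (p : ℝ) (n : ℕ) (A : Finset ℕ) : ℝ :=
  ∑ v ∈ (Finset.range (2^(n+1)-1)).filter (fun v => A ⊆ pathSet v), p ^ (pathSet v).card

variable {p : ℝ} {n : ℕ}

lemma nu_pos (hp0 : 0 < p) (hp1 : p < 1) : 0 < nu p :=
  Real.sqrt_pos.mpr (div_pos (by linarith) hp0)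

lemma nu_key (hp0 : 0 < p) (hp1 : p < 1) : nu p * p = (nu p)⁻¹ * (1 - p) := by
  have h1 : nu p * nu p = (1 - p) / p :=
    Real.mul_self_sqrt (le_of_lt (div_pos (by linarith) hp0))
  have h3 : nu p * nu p * p = 1 - p := by
    rw [h1]; field_simp
  have h2 : (0:ℝ) < nu p := nu_pos hp0 hp1
  field_simp
  linear_combination h3

lemma sum_term_eq (hp0 : 0 < p) (hp1 : p < 1) {A : Finset ℕ} (hA : A ⊆ Eset n)
    {v : ℕ} (hP : pathSet v ⊆ Eset n) :
    ∑ x ∈ (Eset n).powerset,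
      (∏ e ∈ pathSet v, (if e ∈ x then (1:ℝ) else 0)) * PsiT p A x * piT p n x
    = if A ⊆ pathSet v then nu p ^ A.card * p ^ (pathSet v).card else 0 := by
  set B := Eset n with hB
  set P := pathSet v with hPdef
  set a : ℕ → ℝ := fun e => (if e ∈ A then nu p else 1) * p with ha
  set b : ℕ → ℝ := fun e => (if e ∈ A then -(nu p)⁻¹ else 1) * (if e ∈ P then 0 else (1-p)) with hb
  have stepA : ∀ x ∈ B.powerset,
      (∏ e ∈ P, (if e ∈ x then (1:ℝ) else 0)) * PsiT p A x * piT p n x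
      = (∏ e ∈ x, a e) * ∏ e ∈ B \ x, b e := by
    intro x hx
    rw [Finset.mem_powerset] at hx
    have h1 : PsiT p A x = ∏ e ∈ B, (if e ∈ A then (if e ∈ x then nu p else -(nu p)⁻¹) else 1) := by
      rw [PsiT,
        show (∏ i ∈ A, (if i ∈ x then nu p else -(nu p)⁻¹))
          = ∏ i ∈ A, (if i ∈ A then (if i ∈ x then nu p else -(nu p)⁻¹) else 1) from
          Finset.prod_congr rfl (fun e he => (if_pos he).symm)]
      exact Finset.prod_subset hA (fun e _ he => if_neg he)
    have h2 : (∏ e ∈ P, (if e ∈ x then (1:ℝ) else 0))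
        = ∏ e ∈ B, (if e ∈ P then (if e ∈ x then (1:ℝ) else 0) else 1) := by
      rw [show (∏ e ∈ P, (if e ∈ x then (1:ℝ) else 0))
          = ∏ e ∈ P, (if e ∈ P then (if e ∈ x then (1:ℝ) else 0) else 1) from
          Finset.prod_congr rfl (fun e he => (if_pos he).symm)]
      exact Finset.prod_subset hP (fun e _ he => if_neg he)
    have h3 : piT p n x = ∏ e ∈ B, (if e ∈ x then p else (1-p)) := by
      rw [piT, Finset.prod_ite, Finset.prod_const, Finset.prod_const]
      congr 2
      · rw [Finset.filter_mem_eq_inter, Finset.inter_eq_right.mpr hx]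
      · rw [← Finset.card_sdiff_of_subset hx]
        congr 1
        ext e; simp [Finset.mem_sdiff]
    rw [h1, h2, h3, ← Finset.prod_mul_distrib, ← Finset.prod_mul_distrib]
    have key : ∀ e ∈ B,
        (if e ∈ P then (if e ∈ x then (1:ℝ) else 0) else 1) *
        (if e ∈ A then (if e ∈ x then nu p else -(nu p)⁻¹) else 1) *
        (if e ∈ x then p else (1-p)) = if e ∈ x then a e else b e := by
      intro e _
      by_cases hex : e ∈ x <;> by_cases heA : e ∈ A <;> by_cases heP : e ∈ P <;>
        simp [hex, heA, heP, ha, hb] <;> ring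
    rw [Finset.prod_congr rfl key]
    conv_lhs => rw [← Finset.union_sdiff_of_subset hx]
    rw [Finset.prod_union Finset.disjoint_sdiff]
    congr 1
    · exact Finset.prod_congr rfl (fun e he => if_pos he)
    · exact Finset.prod_congr rfl (fun e he => if_neg (Finset.mem_sdiff.mp he).2)
  rw [Finset.sum_congr rfl stepA, ← Finset.prod_add]
  by_cases hAP : A ⊆ P
  · rw [if_pos hAP]
    have houter : ∀ e ∈ B, e ∉ P → a e + b e = 1 := by
      intro e _ heP
      have heA : e ∉ A := fun h => heP (hAP h)
      simp [ha, hb, heA, heP]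
    rw [← Finset.prod_subset hP houter]
    have hin : ∀ e ∈ P, a e + b e = if e ∈ A then nu p * p else p := by
      intro e heP
      by_cases heA : e ∈ A <;> simp [ha, hb, heA, heP]
    rw [Finset.prod_congr rfl hin, Finset.prod_ite, Finset.prod_const, Finset.prod_const,
      Finset.filter_mem_eq_inter, Finset.inter_eq_right.mpr hAP]
    have hcard : (P.filter (fun e => e ∉ A)).card = P.card - A.card := by
      rw [show P.filter (fun e => e ∉ A) = P \ A from by ext e; simp [Finset.mem_sdiff],
        Finset.card_sdiff_of_subset hAP]
    rw [hcard, mul_pow]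
    rw [mul_assoc, ← pow_add]
    congr 2
    exact Nat.add_sub_cancel' (Finset.card_le_card hAP)
  · rw [if_neg hAP]
    obtain ⟨e, heA, heP⟩ := Finset.not_subset.mp hAP
    refine Finset.prod_eq_zero (hA heA) ?_
    have : a e + b e = nu p * p + -(nu p)⁻¹ * (1 - p) := by simp [ha, hb, heA, heP]
    rw [this, nu_key hp0 hp1]; ring

lemma pathSet_subset_Eset {v : ℕ} (hv : v ∈ Finset.range (2^(n+1)-1)) :
    pathSet v ⊆ Eset n := by
  intro e he
  have := Finset.mem_Icc.mp (pathSet_subset_Icc v he)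
  rw [Finset.mem_range] at hv
  rw [Eset, Finset.mem_Icc]
  have h2 : (1:ℕ) ≤ 2^(n+1) := Nat.one_le_two_pow
  omega

lemma innT_eq (hp0 : 0 < p) (hp1 : p < 1) {A : Finset ℕ} (hA : A ⊆ Eset n) :
    innT p n (fcl n) (PsiT p A) = nu p ^ A.card * TT p n A := by
  rw [innT]
  have h1 : ∀ x ∈ (Eset n).powerset, fcl n x * PsiT p A x * piT p n x
      = ∑ v ∈ Finset.range (2^(n+1)-1),
          (∏ e ∈ pathSet v, (if e ∈ x then (1:ℝ) else 0)) * PsiT p A x * piT p n x := by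
    intro x _
    rw [fcl, Finset.sum_mul, Finset.sum_mul]
  rw [Finset.sum_congr rfl h1, Finset.sum_comm]
  have h2 : ∀ v ∈ Finset.range (2^(n+1)-1),
      (∑ x ∈ (Eset n).powerset,
        (∏ e ∈ pathSet v, (if e ∈ x then (1:ℝ) else 0)) * PsiT p A x * piT p n x)
      = if A ⊆ pathSet v then nu p ^ A.card * p ^ (pathSet v).card else 0 := by
    intro v hv
    exact sum_term_eq hp0 hp1 hA (pathSet_subset_Eset hv)
  rw [Finset.sum_congr rfl h2, Finset.sum_ite, Finset.sum_const_zero, add_zero,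
    TT, Finset.mul_sum]


variable {w : ℕ}

lemma depth_bounds (hw : w ∈ Eset n) : 1 ≤ depth w ∧ depth w ≤ n := by
  rw [Eset, Finset.mem_Icc] at hw
  have hlow : 2 ^ depth w ≤ w + 1 := Nat.log2_self_le (by omega)
  have hhigh : w + 1 < 2 ^ (depth w + 1) := Nat.lt_log2_self
  constructor
  · rcases Nat.eq_zero_or_pos (depth w) with h | h
    · rw [h] at hhigh; norm_num at hhigh; omega
    · exact h
  · by_contra hcon
    have : n + 1 ≤ depth w := by omega
    have := Nat.pow_le_pow_right (show 1 ≤ 2 by norm_num) this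
    omega

lemma mem_filter_desc {v : ℕ} (hw1 : 1 ≤ w) (hwn : depth w ≤ n) :
    (v ∈ Finset.range (2^(n+1)-1) ∧ w ∈ pathSet v) ↔
    ∃ j ≤ n - depth w, 2^j * (w+1) ≤ v + 1 ∧ v + 1 < 2^j * (w+1) + 2^j := by
  have hlow : 2 ^ depth w ≤ w + 1 := Nat.log2_self_le (by omega)
  have hhigh : w + 1 < 2 ^ (depth w + 1) := Nat.lt_log2_self
  constructor
  · rintro ⟨hv, hmem⟩
    rw [Finset.mem_range] at hv
    obtain ⟨-, j, hj⟩ := mem_pathSet_iff.mp hmem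
    have hj1 : 2^j * (w+1) ≤ v + 1 := by
      rw [mul_comm]
      exact (Nat.le_div_iff_mul_le (Nat.pow_pos (by norm_num))).mp hj.ge
    have hj2 : v + 1 < 2^j * (w+1) + 2^j := by
      have : (v+1)/2^j < w + 2 := by omega
      have := (Nat.div_lt_iff_lt_mul (Nat.pow_pos (by norm_num))).mp this
      nlinarith
    refine ⟨j, ?_, hj1, hj2⟩
    -- j ≤ n - depth w
    by_contra hcon
    have h1 : n - depth w + 1 ≤ j := by omega
    have h2 : 2 ^ (j + depth w) ≤ 2^j * (w+1) := by
      rw [pow_add]; exact Nat.mul_le_mul_left _ hlow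
    have h3 : 2 ^ (n+1) ≤ 2 ^ (j + depth w) := Nat.pow_le_pow_right (by norm_num) (by omega)
    have h4 : (1:ℕ) ≤ 2^(n+1) := Nat.one_le_two_pow
    omega
  · rintro ⟨j, hjle, h1, h2⟩
    have hdiv : (v + 1) / 2 ^ j = w + 1 := by
      have hp2 : 0 < 2^j := Nat.pow_pos (by norm_num)
      have hl : w + 1 ≤ (v+1)/2^j := (Nat.le_div_iff_mul_le hp2).mpr (by linarith [h1])
      have hr : (v+1)/2^j < w + 2 := (Nat.div_lt_iff_lt_mul hp2).mpr (by nlinarith)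
      omega
    have hvr : v < 2^(n+1) - 1 := by
      have e1 : v + 1 < 2^j * 2^(depth w + 1) := by
        calc v + 1 < 2^j * (w+1) + 2^j := h2
        _ = 2^j * (w+2) := by ring
        _ ≤ 2^j * 2^(depth w + 1) := Nat.mul_le_mul_left _ (by omega)
      have e2 : (2:ℕ)^j * 2^(depth w + 1) ≤ 2^(n+1) := by
        rw [← pow_add]
        exact Nat.pow_le_pow_right (by norm_num) (by omega)
      omega
    exact ⟨Finset.mem_range.mpr hvr, mem_pathSet_iff.mpr ⟨by omega, j, hdiv⟩⟩

lemma filter_desc_eq (hw1 : 1 ≤ w) (hwn : depth w ≤ n) :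
    (Finset.range (2^(n+1)-1)).filter (fun v => w ∈ pathSet v)
    = (Finset.range (n - depth w + 1)).biUnion
        (fun j => Finset.Ico (2^j * (w+1) - 1) (2^j * (w+1) + 2^j - 1)) := by
  ext v
  rw [Finset.mem_filter, Finset.mem_biUnion]
  rw [mem_filter_desc hw1 hwn]
  constructor
  · rintro ⟨j, hj, h1, h2⟩
    have hp2 : 0 < 2^j := Nat.pow_pos (by norm_num)
    exact ⟨j, Finset.mem_range.mpr (by omega), Finset.mem_Ico.mpr (by omega)⟩
  · rintro ⟨j, hj, hv⟩
    rw [Finset.mem_range] at hj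
    rw [Finset.mem_Ico] at hv
    have hp2 : 0 < 2^j := Nat.pow_pos (by norm_num)
    have hq : 1 ≤ 2^j * (w+1) := Nat.mul_pos hp2 (by omega)
    exact ⟨j, by omega, by omega, by omega⟩

lemma TT_single (hw : w ∈ Eset n) :
    TT p n {w} = ∑ j ∈ Finset.range (n - depth w + 1), (2:ℝ)^j * p^(depth w + j) := by
  obtain ⟨hd1, hdn⟩ := depth_bounds hw
  have hw1 : 1 ≤ w := (Finset.mem_Icc.mp hw).1
  rw [TT]
  have hfe : (Finset.range (2^(n+1)-1)).filter (fun v => ({w} : Finset ℕ) ⊆ pathSet v)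
      = (Finset.range (2^(n+1)-1)).filter (fun v => w ∈ pathSet v) := by
    apply Finset.filter_congr; intro v _; simp [Finset.singleton_subset_iff]
  rw [hfe, filter_desc_eq hw1 hdn]
  rw [Finset.sum_biUnion]
  · apply Finset.sum_congr rfl
    intro j hj
    rw [Finset.mem_range] at hj
    have hp2 : (0:ℕ) < 2^j := Nat.pow_pos (by norm_num)
    have hq : 1 ≤ 2^j * (w+1) := Nat.mul_pos hp2 (by omega)
    have hcardsum : ∀ v ∈ Finset.Ico (2^j * (w+1) - 1) (2^j * (w+1) + 2^j - 1),
        (p:ℝ) ^ (pathSet v).card = p ^ (depth w + j) := by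
      intro v hv
      rw [Finset.mem_Ico] at hv
      rw [card_pathSet]
      congr 1
      have hlow : 2 ^ depth w ≤ w + 1 := Nat.log2_self_le (by omega)
      have hhigh : w + 1 < 2 ^ (depth w + 1) := Nat.lt_log2_self
      have h1 : 2 ^ (depth w + j) ≤ v + 1 := by
        calc 2 ^ (depth w + j) = 2^j * 2^(depth w) := by rw [add_comm, pow_add]
        _ ≤ 2^j * (w+1) := Nat.mul_le_mul_left _ hlow
        _ ≤ v + 1 := by omega
      have h2 : v + 1 < 2 ^ (depth w + j + 1) := by
        calc v + 1 < 2^j * (w+1) + 2^j := by omega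
        _ = 2^j * (w+2) := by ring
        _ ≤ 2^j * 2^(depth w + 1) := Nat.mul_le_mul_left _ (by omega)
        _ = 2 ^ (depth w + j + 1) := by rw [← pow_add]; ring_nf
      rw [Nat.log2_eq_log_two]
      exact Nat.log_eq_of_pow_le_of_lt_pow h1 h2
    rw [Finset.sum_congr rfl hcardsum, Finset.sum_const, Nat.card_Ico, nsmul_eq_mul]
    congr 1
    have : 2^j * (w+1) + 2^j - 1 - (2^j * (w+1) - 1) = 2^j := by omega
    rw [this]
    push_cast; ring
  · -- pairwise disjoint
    intro i hi j hj hij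
    apply Finset.disjoint_left.mpr
    intro v hvi hvj
    rw [Finset.mem_Ico] at hvi hvj
    rcases Nat.lt_or_ge i j with h | h
    · have h1 : 2^i * (w+1) + 2^i ≤ 2^j * (w+1) := by
        calc 2^i * (w+1) + 2^i ≤ 2^i * (w+1) + 2^i * (w+1) :=
              Nat.add_le_add_left (Nat.le_mul_of_pos_right _ (by omega)) _
        _ = 2^(i+1) * (w+1) := by ring
        _ ≤ 2^j * (w+1) := Nat.mul_le_mul_right _ (Nat.pow_le_pow_right (by norm_num) (by omega))
      have hqi : 1 ≤ 2^i * (w+1) := Nat.mul_pos (Nat.pow_pos (by norm_num)) (by omega)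
      have hqj : 1 ≤ 2^j * (w+1) := Nat.mul_pos (Nat.pow_pos (by norm_num)) (by omega)
      omega
    · have h : j < i := by omega
      have h1 : 2^j * (w+1) + 2^j ≤ 2^i * (w+1) := by
        calc 2^j * (w+1) + 2^j ≤ 2^j * (w+1) + 2^j * (w+1) :=
              Nat.add_le_add_left (Nat.le_mul_of_pos_right _ (by omega)) _
        _ = 2^(j+1) * (w+1) := by ring
        _ ≤ 2^i * (w+1) := Nat.mul_le_mul_right _ (Nat.pow_le_pow_right (by norm_num) (by omega))
      have hqi : 1 ≤ 2^i * (w+1) := Nat.mul_pos (Nat.pow_pos (by norm_num)) (by omega)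
      have hqj : 1 ≤ 2^j * (w+1) := Nat.mul_pos (Nat.pow_pos (by norm_num)) (by omega)
      omega

lemma sup_id_mem {A : Finset ℕ} (hAne : A.Nonempty) : A.sup id ∈ A := by
  rw [← Finset.sup'_eq_sup hAne id]
  exact Finset.sup'_mem (↑A) (fun a ha b hb => by
    rcases le_total a b with h | h
    · rw [sup_eq_right.mpr h]; exact hb
    · rw [sup_eq_left.mpr h]; exact ha) A hAne id (fun b hb => hb)

lemma TT_chain {A : Finset ℕ} (hAne : A.Nonempty) :
    TT p n A = if A ⊆ pathSet (A.sup id) then TT p n {A.sup id} else 0 := by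
  have hwA : A.sup id ∈ A := sup_id_mem hAne
  by_cases hch : A ⊆ pathSet (A.sup id)
  · rw [if_pos hch, TT, TT]
    apply Finset.sum_congr _ (fun _ _ => rfl)
    apply Finset.filter_congr
    intro v _
    simp only [Finset.singleton_subset_iff, eq_iff_iff]
    constructor
    · intro h; exact h hwA
    · intro h; exact fun a ha => pathSet_subset_of_mem h (hch ha)
  · rw [if_neg hch, TT]
    rw [Finset.filter_false_of_mem, Finset.sum_empty]
    intro v hv h
    exact hch (fun a ha => mem_pathSet_of_le (h ha) (h hwA) (Finset.le_sup (f := id) ha))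


lemma pathSet_subset_Eset' {w : ℕ} (hw : w ∈ Eset n) : pathSet w ⊆ Eset n := by
  intro e he
  have h := Finset.mem_Icc.mp (pathSet_subset_Icc w he)
  rw [Eset, Finset.mem_Icc] at hw ⊢
  omega

lemma sum_reindex (F : Finset ℕ → ℝ)
    (hF0 : ∀ A : Finset ℕ, A.Nonempty → ¬ A ⊆ pathSet (A.sup id) → F A = 0) :
    ∑ A ∈ (Eset n).powerset.filter (fun A => A.Nonempty), F A
    = ∑ w ∈ Eset n, ∑ K ∈ ((pathSet w).erase w).powerset, F (insert w K) := by
  have hsub : (Eset n).powerset.filter (fun A => A.Nonempty ∧ A ⊆ pathSet (A.sup id))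
      ⊆ (Eset n).powerset.filter (fun A => A.Nonempty) := by
    intro A hA
    rw [Finset.mem_filter] at hA ⊢
    exact ⟨hA.1, hA.2.1⟩
  rw [← Finset.sum_subset hsub (by
    intro A hA hA2
    rw [Finset.mem_filter] at hA
    rw [Finset.mem_filter, not_and, not_and] at hA2
    exact hF0 A hA.2 (hA2 hA.1 hA.2))]
  rw [← Finset.sum_sigma (Eset n) (fun w => ((pathSet w).erase w).powerset)
      (fun x => F (insert x.1 x.2))]
  apply Finset.sum_nbij' (fun A => (⟨A.sup id, A.erase (A.sup id)⟩ :
      (_ : ℕ) × Finset ℕ)) (fun x => insert x.1 x.2)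
  · -- hi
    intro A hA
    rw [Finset.mem_filter, Finset.mem_powerset] at hA
    obtain ⟨hAE, hAne, hch⟩ := hA
    have hw : A.sup id ∈ A := sup_id_mem hAne
    rw [Finset.mem_sigma, Finset.mem_powerset]
    constructor
    · exact hAE hw
    · intro a ha
      rw [Finset.mem_erase] at ha ⊢
      exact ⟨ha.1, hch ha.2⟩
  · -- hj
    intro x hx
    rw [Finset.mem_sigma, Finset.mem_powerset] at hx
    obtain ⟨hwE, hK⟩ := hx
    have hw1 : 1 ≤ x.1 := (Finset.mem_Icc.mp hwE).1
    have hKp : x.2 ⊆ pathSet x.1 := hK.trans (Finset.erase_subset _ _)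
    have hKlt : ∀ a ∈ x.2, a ≤ x.1 := by
      intro a ha
      exact (Finset.mem_Icc.mp (pathSet_subset_Icc _ (hKp ha))).2
    have hsup : (insert x.1 x.2).sup id = x.1 := by
      rw [Finset.sup_insert]
      exact sup_eq_left.mpr (Finset.sup_le hKlt)
    rw [Finset.mem_filter, Finset.mem_powerset]
    refine ⟨?_, Finset.insert_nonempty _ _, ?_⟩
    · intro a ha
      rcases Finset.mem_insert.mp ha with h | h
      · subst h; exact hwE
      · exact pathSet_subset_Eset' hwE (hKp h)
    · rw [hsup]
      intro a ha
      rcases Finset.mem_insert.mp ha with h | h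
      · subst h; exact self_mem_pathSet hw1
      · exact hKp h
  · -- left inverse
    intro A hA
    rw [Finset.mem_filter] at hA
    have hw : A.sup id ∈ A := sup_id_mem hA.2.1
    simp only
    rw [Finset.insert_erase hw]
  · -- right inverse
    intro x hx
    rw [Finset.mem_sigma, Finset.mem_powerset] at hx
    have hxne : x.1 ∉ x.2 := fun h => (Finset.mem_erase.mp (hx.2 h)).1 rfl
    have hw1 : 1 ≤ x.1 := (Finset.mem_Icc.mp hx.1).1
    have hKp : x.2 ⊆ pathSet x.1 := hx.2.trans (Finset.erase_subset _ _)
    have hKlt : ∀ a ∈ x.2, a ≤ x.1 := fun a ha =>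
      (Finset.mem_Icc.mp (pathSet_subset_Icc _ (hKp ha))).2
    have hsup : (insert x.1 x.2).sup id = x.1 := by
      rw [Finset.sup_insert]
      exact sup_eq_left.mpr (Finset.sup_le hKlt)
    have : (⟨(insert x.1 x.2).sup id, (insert x.1 x.2).erase ((insert x.1 x.2).sup id)⟩ :
        (_ : ℕ) × Finset ℕ) = ⟨x.1, x.2⟩ := by
      rw [Sigma.mk.inj_iff]
      refine ⟨hsup, ?_⟩
      rw [hsup, Finset.erase_insert hxne]
    rw [this]
  · -- values
    intro A hA
    simp only
    rw [Finset.mem_filter] at hA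
    have hw : A.sup id ∈ A := sup_id_mem hA.2.1
    rw [Finset.insert_erase hw]

lemma Eset_biUnion :
    Eset n = (Finset.Icc 1 n).biUnion (fun D => Finset.Ico (2^D - 1) (2^(D+1) - 1)) := by
  ext w
  rw [Finset.mem_biUnion]
  constructor
  · intro hw
    obtain ⟨hd1, hdn⟩ := depth_bounds hw
    have hw1 : 1 ≤ w := (Finset.mem_Icc.mp hw).1
    have hlow : 2 ^ depth w ≤ w + 1 := Nat.log2_self_le (by omega)
    have hhigh : w + 1 < 2 ^ (depth w + 1) := Nat.lt_log2_self
    exact ⟨depth w, Finset.mem_Icc.mpr ⟨hd1, hdn⟩, Finset.mem_Ico.mpr (by omega)⟩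
  · rintro ⟨D, hD, hw⟩
    rw [Finset.mem_Icc] at hD
    rw [Finset.mem_Ico] at hw
    have h1 : (2:ℕ)^1 ≤ 2^D := Nat.pow_le_pow_right (by norm_num) hD.1
    have h2 : (2:ℕ)^(D+1) ≤ 2^(n+1) := Nat.pow_le_pow_right (by norm_num) (by omega)
    rw [Eset, Finset.mem_Icc]
    norm_num at h1
    omega

lemma depth_of_mem_Ico {D w : ℕ} (hD : 1 ≤ D) (hw : w ∈ Finset.Ico (2^D - 1) (2^(D+1) - 1)) :
    depth w = D := by
  rw [Finset.mem_Ico] at hw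
  have h1 : (2:ℕ)^1 ≤ 2^D := Nat.pow_le_pow_right (by norm_num) hD
  norm_num at h1
  rw [depth, Nat.log2_eq_log_two]
  exact Nat.log_eq_of_pow_le_of_lt_pow (by omega) (by omega)

lemma sum_depth (H : ℕ → ℝ) :
    ∑ w ∈ Eset n, H (depth w) = ∑ D ∈ Finset.Icc 1 n, (2:ℝ)^D * H D := by
  rw [Eset_biUnion, Finset.sum_biUnion]
  · apply Finset.sum_congr rfl
    intro D hD
    rw [Finset.mem_Icc] at hD
    have key : ∀ w ∈ Finset.Ico (2^D - 1) (2^(D+1) - 1), H (depth w) = H D := by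
      intro w hw
      rw [depth_of_mem_Ico hD.1 hw]
    rw [Finset.sum_congr rfl key, Finset.sum_const, Nat.card_Ico, nsmul_eq_mul]
    have h1 : (2:ℕ)^1 ≤ 2^D := Nat.pow_le_pow_right (by norm_num) hD.1
    have h2 : (2:ℕ)^D ≤ 2^(D+1) := Nat.pow_le_pow_right (by norm_num) (by omega)
    norm_num at h1
    have : 2^(D+1) - 1 - (2^D - 1) = 2^D := by
      have : (2:ℕ)^(D+1) = 2 * 2^D := by rw [pow_succ]; ring
      omega
    rw [this]
    push_cast
    ring
  · intro i hi j hj hij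
    rw [Finset.mem_coe, Finset.mem_Icc] at hi hj
    apply Finset.disjoint_left.mpr
    intro v hvi hvj
    rw [Finset.mem_Ico] at hvi hvj
    rcases Nat.lt_or_ge i j with h | h
    · have : (2:ℕ)^(i+1) ≤ 2^j := Nat.pow_le_pow_right (by norm_num) (by omega)
      have h1 : (2:ℕ)^1 ≤ 2^i := Nat.pow_le_pow_right (by norm_num) hi.1
      norm_num at h1
      omega
    · have hji : j < i := by omega
      have : (2:ℕ)^(j+1) ≤ 2^i := Nat.pow_le_pow_right (by norm_num) (by omega)
      have h1 : (2:ℕ)^1 ≤ 2^j := Nat.pow_le_pow_right (by norm_num) hj.1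
      norm_num at h1
      omega


def GG (p : ℝ) (n D : ℕ) : ℝ := ∑ j ∈ Finset.range (n - D + 1), (2*p)^j

lemma nu_sq (hp0 : 0 < p) (hp1 : p < 1) : nu p ^ 2 = (1 - p) / p := by
  rw [nu, Real.sq_sqrt (le_of_lt (div_pos (by linarith) hp0))]

lemma TT_single_factor (hp0 : 0 < p) {w : ℕ} (hw : w ∈ Eset n) :
    TT p n {w} = p ^ depth w * GG p n (depth w) := by
  rw [TT_single hw, GG, Finset.mul_sum]
  apply Finset.sum_congr rfl
  intro j _
  rw [pow_add, mul_pow]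
  ring

lemma weighted_le (hp0 : 0 < p) (hp1 : p < 1) :
    ∑ A ∈ (Eset n).powerset.filter (fun A => A.Nonempty),
      (A.card : ℝ) * (innT p n (fcl n) (PsiT p A))^2
    ≤ ((1-p)/p) * p * ∑ D ∈ Finset.Icc 1 n, (D:ℝ) * (2*p)^D * (GG p n D)^2 := by
  set r : ℝ := (1-p)/p with hrdef
  have hr : 0 < r := div_pos (by linarith) hp0
  have hnu2 : nu p ^ 2 = r := nu_sq hp0 hp1
  set F : Finset ℕ → ℝ := fun A => (A.card : ℝ) * (nu p ^ A.card * TT p n A)^2 with hF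
  have step1 : ∑ A ∈ (Eset n).powerset.filter (fun A => A.Nonempty),
      (A.card : ℝ) * (innT p n (fcl n) (PsiT p A))^2
      = ∑ A ∈ (Eset n).powerset.filter (fun A => A.Nonempty), F A := by
    apply Finset.sum_congr rfl
    intro A hA
    rw [Finset.mem_filter, Finset.mem_powerset] at hA
    rw [innT_eq hp0 hp1 hA.1]
  have hF0 : ∀ A : Finset ℕ, A.Nonempty → ¬ A ⊆ pathSet (A.sup id) → F A = 0 := by
    intro A hAne hch
    rw [hF]
    simp only
    rw [TT_chain hAne, if_neg hch]
    ring
  rw [step1, sum_reindex F hF0]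
  set H : ℕ → ℝ := fun D => (D:ℝ) * r * (r+1)^(D-1) * (p^D * GG p n D)^2 with hH
  have step3 : ∀ w ∈ Eset n,
      ∑ K ∈ ((pathSet w).erase w).powerset, F (insert w K) ≤ H (depth w) := by
    intro w hwE
    have hw1 : 1 ≤ w := (Finset.mem_Icc.mp hwE).1
    have hd1 : 1 ≤ depth w := (depth_bounds hwE).1
    have hcard_erase : ((pathSet w).erase w).card = depth w - 1 := by
      rw [Finset.card_erase_of_mem (self_mem_pathSet hw1), card_pathSet]
      rfl
    have hsingle : TT p n {w} = p ^ depth w * GG p n (depth w) := TT_single_factor hp0 hwE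
    have hterm : ∀ K ∈ ((pathSet w).erase w).powerset,
        F (insert w K) ≤ (depth w : ℝ) * (r^(K.card+1) * (p ^ depth w * GG p n (depth w))^2) := by
      intro K hK
      rw [Finset.mem_powerset] at hK
      have hwK : w ∉ K := fun h => (Finset.mem_erase.mp (hK h)).1 rfl
      have hcard : (insert w K).card = K.card + 1 := Finset.card_insert_of_notMem hwK
      have hKp : K ⊆ pathSet w := hK.trans (Finset.erase_subset _ _)
      have hKlt : ∀ a ∈ K, a ≤ w := fun a ha =>
        (Finset.mem_Icc.mp (pathSet_subset_Icc _ (hKp ha))).2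
      have hsup : (insert w K).sup id = w := by
        rw [Finset.sup_insert]
        exact sup_eq_left.mpr (Finset.sup_le hKlt)
      have hch : insert w K ⊆ pathSet ((insert w K).sup id) := by
        rw [hsup]
        intro a ha
        rcases Finset.mem_insert.mp ha with h | h
        · subst h; exact self_mem_pathSet hw1
        · exact hKp h
      have hTT : TT p n (insert w K) = TT p n {w} := by
        rw [TT_chain (Finset.insert_nonempty _ _), if_pos hch, hsup]
      have hFval : F (insert w K) = ((K.card:ℝ)+1) * (r^(K.card+1) * (TT p n {w})^2) := by
        rw [hF]
        simp only
        rw [hTT, hcard, mul_pow, ← pow_mul, mul_comm (K.card+1) 2, pow_mul, hnu2]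
        push_cast
        ring
      rw [hFval, hsingle]
      apply mul_le_mul_of_nonneg_right
      · have : K.card ≤ depth w - 1 := hcard_erase ▸ Finset.card_le_card hK
        have : K.card + 1 ≤ depth w := by omega
        exact_mod_cast this
      · positivity
    have hpow : ∑ K ∈ ((pathSet w).erase w).powerset, (r:ℝ)^K.card
        = (r+1)^((pathSet w).erase w).card := by
      have h := Finset.sum_pow_mul_eq_add_pow r 1 ((pathSet w).erase w)
      simpa using h
    calc ∑ K ∈ ((pathSet w).erase w).powerset, F (insert w K)
        ≤ ∑ K ∈ ((pathSet w).erase w).powerset,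
            (depth w : ℝ) * (r^(K.card+1) * (p ^ depth w * GG p n (depth w))^2) :=
          Finset.sum_le_sum hterm
      _ = (depth w : ℝ) * ((r+1)^(depth w - 1) *
            (r * (p ^ depth w * GG p n (depth w))^2)) := by
          rw [← Finset.mul_sum]
          congr 1
          have htr : ∀ K ∈ ((pathSet w).erase w).powerset,
              r^(K.card+1) * (p ^ depth w * GG p n (depth w))^2
              = r^K.card * (r * (p ^ depth w * GG p n (depth w))^2) := by
            intro K _
            rw [pow_succ]; ring
          rw [Finset.sum_congr rfl htr, ← Finset.sum_mul, hpow, hcard_erase]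
      _ = H (depth w) := by rw [hH]; ring
  calc ∑ w ∈ Eset n, ∑ K ∈ ((pathSet w).erase w).powerset, F (insert w K)
      ≤ ∑ w ∈ Eset n, H (depth w) := Finset.sum_le_sum step3
    _ = ∑ D ∈ Finset.Icc 1 n, (2:ℝ)^D * H D := sum_depth H
    _ = r * p * ∑ D ∈ Finset.Icc 1 n, (D:ℝ) * (2*p)^D * (GG p n D)^2 := by
        rw [Finset.mul_sum]
        apply Finset.sum_congr rfl
        intro D hD
        have hD1 : 1 ≤ D := (Finset.mem_Icc.mp hD).1
        have hr1 : r + 1 = p⁻¹ := by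
          rw [hrdef]; field_simp; ring
        have hDD : (D-1) + (D+1) = 2*D := by omega
        have hsq : (p^D * GG p n D)^2 = (p^(D-1) * p^(D+1)) * (GG p n D)^2 := by
          rw [mul_pow, ← pow_mul, mul_comm D 2, ← pow_add, hDD]
        rw [hH]
        simp only
        rw [hr1, hsq, inv_pow]
        have hne : (p:ℝ)^(D-1) ≠ 0 := by positivity
        field_simp
        rw [mul_pow, pow_succ p D]
        ring

lemma varT_ge (hp0 : 0 < p) (hp1 : p < 1) (hn : 1 ≤ n) :
    ((1-p)/p) * (p * GG p n 1)^2 ≤ varT p n := by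
  have hmem : ({1} : Finset ℕ) ∈ (Eset n).powerset.filter (fun A => A.Nonempty) := by
    rw [Finset.mem_filter, Finset.mem_powerset, Finset.singleton_subset_iff]
    refine ⟨?_, Finset.singleton_nonempty 1⟩
    rw [Eset, Finset.mem_Icc]
    have : (2:ℕ)^2 ≤ 2^(n+1) := Nat.pow_le_pow_right (by norm_num) (by omega)
    norm_num at this ⊢
    omega
  have h1E : (1 : ℕ) ∈ Eset n := by
    have := Finset.mem_powerset.mp (Finset.mem_filter.mp hmem).1
    exact this (Finset.mem_singleton_self 1)
  have hval : (innT p n (fcl n) (PsiT p ({1} : Finset ℕ)))^2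
      = ((1-p)/p) * (p * GG p n 1)^2 := by
    rw [innT_eq hp0 hp1 (Finset.mem_powerset.mp (Finset.mem_filter.mp hmem).1)]
    rw [TT_single_factor hp0 h1E]
    have hd : depth 1 = 1 := by
      rw [depth, Nat.log2_eq_log_two]
      exact Nat.log_eq_one_iff.mpr (by norm_num)
    rw [hd, Finset.card_singleton, mul_pow, ← nu_sq hp0 hp1]
    ring
  rw [varT, ← hval]
  exact Finset.single_le_sum
    (f := fun A => (innT p n (fcl n) (PsiT p A))^2) (fun A _ => sq_nonneg _) hmem


lemma GG_nonneg (hp0 : 0 < p) : ∀ n D, 0 ≤ GG p n D := by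
  intro n D
  apply Finset.sum_nonneg
  intro j _
  positivity

lemma GG_one_ge_one (hp0 : 0 < p) (hn : 1 ≤ n) : 1 ≤ GG p n 1 := by
  rw [GG]
  have h0 : (0:ℕ) ∈ Finset.range (n - 1 + 1) := Finset.mem_range.mpr (by omega)
  calc (1:ℝ) = (2*p)^(0:ℕ) := by norm_num
  _ ≤ ∑ j ∈ Finset.range (n - 1 + 1), (2*p)^j :=
      Finset.single_le_sum (fun j _ => by positivity) h0

lemma sum_D_qD_le {q : ℝ} (hq0 : 0 ≤ q) (hq1 : q < 1) (S : Finset ℕ) :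
    ∑ D ∈ S, (D:ℝ) * q^D ≤ q / (1-q)^2 := by
  have hnorm : ‖q‖ < 1 := by rw [Real.norm_eq_abs, abs_of_nonneg hq0]; exact hq1
  have hsum : HasSum (fun D : ℕ => (D:ℝ) * q^D) (q / (1-q)^2) :=
    hasSum_coe_mul_geometric_of_norm_lt_one hnorm
  exact sum_le_hasSum S (fun D _ => by positivity) hsum

lemma exists_C (hp0 : 0 < p) (hp1 : p < 1) (hpc : p ≠ 1/2) :
    ∃ C : ℝ, 0 < C ∧ ∀ n : ℕ, 1 ≤ n →
      ∑ D ∈ Finset.Icc 1 n, (D:ℝ) * (2*p)^D * (GG p n D)^2 ≤ C * (GG p n 1)^2 := by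
  set q : ℝ := 2*p with hqdef
  have hq0 : 0 < q := by positivity
  have hq1 : q ≠ 1 := by
    rw [hqdef]; intro h; apply hpc; linarith
  rcases lt_or_gt_of_ne hq1 with hq | hq
  · -- subcritical
    have h1q : (0:ℝ) < 1 - q := by linarith
    refine ⟨(1/(1-q))^2 * (q/(1-q)^2), by positivity, ?_⟩
    intro n hn
    have hGle : ∀ D, GG p n D ≤ 1/(1-q) := by
      intro D
      rw [GG, geom_sum_eq hq1]
      have heq : (q ^ (n - D + 1) - 1)/(q - 1) = (1 - q ^ (n-D+1))/(1-q) := by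
        rw [div_eq_div_iff (by linarith) (by linarith)]; ring
      rw [heq]
      gcongr
      have : (0:ℝ) ≤ q ^ (n - D + 1) := by positivity
      linarith
    calc ∑ D ∈ Finset.Icc 1 n, (D:ℝ) * q^D * (GG p n D)^2
        ≤ ∑ D ∈ Finset.Icc 1 n, ((D:ℝ) * q^D) * (1/(1-q))^2 := by
          apply Finset.sum_le_sum
          intro D _
          rw [mul_assoc, mul_assoc]
          apply mul_le_mul_of_nonneg_left _ (by positivity : (0:ℝ) ≤ (D:ℝ))
          apply mul_le_mul_of_nonneg_left _ (by positivity : (0:ℝ) ≤ q^D)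
          exact pow_le_pow_left₀ (GG_nonneg hp0 n D) (hGle D) 2
      _ = (∑ D ∈ Finset.Icc 1 n, (D:ℝ) * q^D) * (1/(1-q))^2 := by
          rw [Finset.sum_mul]
      _ ≤ (q/(1-q)^2) * (1/(1-q))^2 :=
          mul_le_mul_of_nonneg_right (sum_D_qD_le (le_of_lt hq0) hq _) (by positivity)
      _ = (1/(1-q))^2 * (q/(1-q)^2) * 1 := by ring
      _ ≤ (1/(1-q))^2 * (q/(1-q)^2) * (GG p n 1)^2 := by
          apply mul_le_mul_of_nonneg_left _ (by positivity)
          have h1 := GG_one_ge_one hp0 hn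
          nlinarith
  · -- supercritical
    have hq1' : (0:ℝ) < q - 1 := by linarith
    set u : ℝ := q⁻¹ with hudef
    have hu0 : 0 < u := by positivity
    have hu1 : u < 1 := by
      rw [hudef, inv_lt_one_iff₀]; right; exact hq
    refine ⟨q^4 * (u/(1-u)^2) / (q-1)^2 + 1, by positivity, ?_⟩
    intro n hn
    have hGle : ∀ D, GG p n D ≤ q^(n-D+1) / (q-1) := by
      intro D
      rw [GG, geom_sum_eq hq1]
      gcongr <;> linarith
    have hG1 : q^(n-1) ≤ GG p n 1 := by
      rw [GG]
      exact Finset.single_le_sum (fun j _ => by positivity)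
        (Finset.mem_range.mpr (by omega))
    have key : ∀ D ∈ Finset.Icc 1 n, (D:ℝ) * q^D * (GG p n D)^2
        ≤ ((D:ℝ) * u^D) * (q^(2*n+2) / (q-1)^2) := by
      intro D hD
      obtain ⟨hD1, hDn⟩ := Finset.mem_Icc.mp hD
      have h1 : (GG p n D)^2 ≤ (q^(n-D+1))^2 / (q-1)^2 := by
        calc (GG p n D)^2 ≤ (q^(n-D+1)/(q-1))^2 :=
            pow_le_pow_left₀ (GG_nonneg hp0 n D) (hGle D) 2
        _ = (q^(n-D+1))^2/(q-1)^2 := by rw [div_pow]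
      have hexp : (D + (n-D+1)*2) + D = 2*n+2 := by omega
      have h2 : q^D * (q^(n-D+1))^2 = q^(2*n+2) * u^D := by
        have hqD : (q:ℝ)^D ≠ 0 := pow_ne_zero D (ne_of_gt hq0)
        have e1 : q^D * (q^(n-D+1))^2 = q^(D + (n-D+1)*2) := by
          rw [← pow_mul, ← pow_add]
        have e2 : q^(D + (n-D+1)*2) * q^D = q^(2*n+2) := by
          rw [← pow_add, hexp]
        rw [e1, hudef, inv_pow, mul_comm (q^(2*n+2)), inv_mul_eq_div,
          eq_div_iff hqD]
        exact e2
      calc (D:ℝ) * q^D * (GG p n D)^2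
          ≤ (D:ℝ) * q^D * ((q^(n-D+1))^2 / (q-1)^2) := by
            apply mul_le_mul_of_nonneg_left h1 (by positivity)
        _ = (D:ℝ) * (q^D * (q^(n-D+1))^2) / (q-1)^2 := by ring
        _ = ((D:ℝ) * u^D) * (q^(2*n+2) / (q-1)^2) := by rw [h2]; ring
    calc ∑ D ∈ Finset.Icc 1 n, (D:ℝ) * q^D * (GG p n D)^2
        ≤ ∑ D ∈ Finset.Icc 1 n, ((D:ℝ) * u^D) * (q^(2*n+2) / (q-1)^2) :=
          Finset.sum_le_sum key
      _ = (∑ D ∈ Finset.Icc 1 n, (D:ℝ) * u^D) * (q^(2*n+2) / (q-1)^2) := by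
          rw [Finset.sum_mul]
      _ ≤ (u/(1-u)^2) * (q^(2*n+2) / (q-1)^2) :=
          mul_le_mul_of_nonneg_right (sum_D_qD_le (le_of_lt hu0) hu1 _) (by positivity)
      _ = (q^4 * (u/(1-u)^2) / (q-1)^2) * (q^(n-1))^2 := by
          have hexp2 : (n-1)*2 + 4 = 2*n+2 := by omega
          rw [← pow_mul, show q^(2*n+2) = q^((n-1)*2) * q^4 from by rw [← pow_add, hexp2]]
          ring
      _ ≤ (q^4 * (u/(1-u)^2) / (q-1)^2) * (GG p n 1)^2 := by
          apply mul_le_mul_of_nonneg_left _ (by positivity)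
          exact pow_le_pow_left₀ (by positivity) hG1 2
      _ ≤ (q^4 * (u/(1-u)^2) / (q-1)^2 + 1) * (GG p n 1)^2 := by
          nlinarith [sq_nonneg (GG p n 1)]


lemma master (hp0 : 0 < p) (hp1 : p < 1) (hpc : p ≠ 1/2) :
    ∃ C : ℝ, 0 < C ∧ ∀ n : ℕ, 1 ≤ n →
      0 < varT p n ∧
      ∑ A ∈ (Eset n).powerset.filter (fun A => A.Nonempty),
        (A.card : ℝ) * (innT p n (fcl n) (PsiT p A))^2 ≤ C * varT p n := by
  obtain ⟨C0, hC00, hC0⟩ := exists_C hp0 hp1 hpc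
  have hr : 0 < (1-p)/p := div_pos (by linarith) hp0
  refine ⟨C0 / p, by positivity, ?_⟩
  intro n hn
  have hG1 : 1 ≤ GG p n 1 := GG_one_ge_one hp0 hn
  have hvlow : ((1-p)/p) * (p * GG p n 1)^2 ≤ varT p n := varT_ge hp0 hp1 hn
  have hvpos : 0 < varT p n := by
    have : (0:ℝ) < ((1-p)/p) * (p * GG p n 1)^2 := by
      have : (0:ℝ) < p * GG p n 1 := by nlinarith
      positivity
    linarith
  refine ⟨hvpos, ?_⟩
  calc ∑ A ∈ (Eset n).powerset.filter (fun A => A.Nonempty),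
        (A.card : ℝ) * (innT p n (fcl n) (PsiT p A))^2
      ≤ ((1-p)/p) * p * ∑ D ∈ Finset.Icc 1 n, (D:ℝ) * (2*p)^D * (GG p n D)^2 :=
        weighted_le hp0 hp1
    _ ≤ ((1-p)/p) * p * (C0 * (GG p n 1)^2) := by
        apply mul_le_mul_of_nonneg_left (hC0 n hn) (by positivity)
    _ = (C0 / p) * (((1-p)/p) * (p * GG p n 1)^2) := by
        field_simp
    _ ≤ (C0 / p) * varT p n := by
        apply mul_le_mul_of_nonneg_left hvlow (by positivity)

/-- for fixed off-critical p (p ∈ (0,1), p ≠ 1/2) and any sequence of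
positive integers s_n: if s_n = o(|B_n|) then ρ_{p,f_n}(s_n) → 1, and if s_n = ω(|B_n|)
then ρ_{p,f_n}(s_n) → 0. -/
theorem tree_offcritical_autocorrelation_decay (p : ℝ) (hp0 : 0 < p) (hp1 : p < 1)
    (hpc : p ≠ 1 / 2) (s : ℕ → ℕ) (hs : ∀ n, 0 < s n) :
    (Tendsto (fun n => (s n : ℝ) / ((2 : ℝ) ^ (n + 1) - 2)) atTop (nhds 0) →
      Tendsto (fun n => rhoT p n (s n)) atTop (nhds 1))
    ∧ (Tendsto (fun n => (s n : ℝ) / ((2 : ℝ) ^ (n + 1) - 2)) atTop atTop →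
      Tendsto (fun n => rhoT p n (s n)) atTop (nhds 0)) := by
  obtain ⟨C, hCpos, hC⟩ := master hp0 hp1 hpc
  -- basic facts for n ≥ 1
  have hfacts : ∀ n : ℕ, 1 ≤ n → ∀ A ∈ (Eset n).powerset.filter (fun A => A.Nonempty),
      1 ≤ A.card ∧ (A.card : ℝ) ≤ (2:ℝ)^(n+1) - 2 := by
    intro n hn A hA
    rw [Finset.mem_filter, Finset.mem_powerset] at hA
    constructor
    · exact Finset.Nonempty.card_pos hA.2
    · have h1 : A.card ≤ (Eset n).card := Finset.card_le_card hA.1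
      have h2 : (Eset n).card = 2^(n+1) - 2 := by
        rw [Eset, Nat.card_Icc]
        omega
      have h3 : (2:ℕ)^1 ≤ 2^(n+1) := Nat.pow_le_pow_right (by norm_num) (by omega)
      norm_num at h3
      have : (A.card : ℝ) ≤ ((2^(n+1) - 2 : ℕ) : ℝ) := by
        exact_mod_cast h2 ▸ h1
      calc (A.card : ℝ) ≤ ((2^(n+1) - 2 : ℕ) : ℝ) := this
        _ = (2:ℝ)^(n+1) - 2 := by
            push_cast [Nat.cast_sub h3]
            norm_num
  have hm2 : ∀ n : ℕ, 1 ≤ n → (2:ℝ) ≤ (2:ℝ)^(n+1) - 2 := by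
    intro n hn
    have : (2:ℝ)^2 ≤ (2:ℝ)^(n+1) := pow_le_pow_right₀ (by norm_num) (by omega)
    norm_num at this
    linarith
  constructor
  · -- Part 1
    intro hs0
    have hlow : ∀ᶠ n in atTop, 1 - C * ((s n : ℝ) / ((2:ℝ)^(n+1) - 2)) ≤ rhoT p n (s n) := by
      filter_upwards [eventually_ge_atTop 1] with n hn
      obtain ⟨hvpos, hw⟩ := hC n hn
      set m : ℝ := (2:ℝ)^(n+1) - 2 with hm
      have hmpos : (0:ℝ) < m := by have := hm2 n hn; linarith
      -- Bernoulli bound per term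
      have hber : ∀ A ∈ (Eset n).powerset.filter (fun A => A.Nonempty),
          (innT p n (fcl n) (PsiT p A))^2 - (innT p n (fcl n) (PsiT p A))^2 *
            (1 - (A.card:ℝ)/m)^(s n)
          ≤ ((s n : ℝ)/m) * ((A.card:ℝ) * (innT p n (fcl n) (PsiT p A))^2) := by
        intro A hA
        obtain ⟨hc1, hcm⟩ := hfacts n hn A hA
        have hθ0 : (0:ℝ) ≤ 1 - (A.card:ℝ)/m := by
          rw [sub_nonneg, div_le_one hmpos]; exact hcm
        have hθ1 : 1 - (A.card:ℝ)/m ≤ 1 := by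
          have : (0:ℝ) ≤ (A.card:ℝ)/m := by positivity
          linarith
        have hbern : 1 - (s n : ℝ) * ((A.card:ℝ)/m) ≤ (1 - (A.card:ℝ)/m)^(s n) := by
          have := one_add_mul_le_pow (a := -((A.card:ℝ)/m)) (by nlinarith) (s n)
          calc 1 - (s n : ℝ) * ((A.card:ℝ)/m) = 1 + (s n : ℝ) * (-((A.card:ℝ)/m)) := by ring
            _ ≤ (1 + (-((A.card:ℝ)/m)))^(s n) := this
            _ = (1 - (A.card:ℝ)/m)^(s n) := by ring_nf
        have hw2 : (0:ℝ) ≤ (innT p n (fcl n) (PsiT p A))^2 := sq_nonneg _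
        calc (innT p n (fcl n) (PsiT p A))^2 - (innT p n (fcl n) (PsiT p A))^2 *
              (1 - (A.card:ℝ)/m)^(s n)
            = (innT p n (fcl n) (PsiT p A))^2 * (1 - (1 - (A.card:ℝ)/m)^(s n)) := by ring
          _ ≤ (innT p n (fcl n) (PsiT p A))^2 * ((s n : ℝ) * ((A.card:ℝ)/m)) := by
              apply mul_le_mul_of_nonneg_left _ hw2
              linarith
          _ = ((s n : ℝ)/m) * ((A.card:ℝ) * (innT p n (fcl n) (PsiT p A))^2) := by ring
      have hdiff : varT p n - (∑ A ∈ (Eset n).powerset.filter (fun A => A.Nonempty),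
          (innT p n (fcl n) (PsiT p A))^2 * (1 - (A.card:ℝ)/m)^(s n))
          ≤ ((s n : ℝ)/m) * (C * varT p n) := by
        rw [varT, ← Finset.sum_sub_distrib]
        calc ∑ A ∈ (Eset n).powerset.filter (fun A => A.Nonempty),
              ((innT p n (fcl n) (PsiT p A))^2 - (innT p n (fcl n) (PsiT p A))^2 *
                (1 - (A.card:ℝ)/m)^(s n))
            ≤ ∑ A ∈ (Eset n).powerset.filter (fun A => A.Nonempty),
              ((s n : ℝ)/m) * ((A.card:ℝ) * (innT p n (fcl n) (PsiT p A))^2) :=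
              Finset.sum_le_sum hber
          _ = ((s n : ℝ)/m) * ∑ A ∈ (Eset n).powerset.filter (fun A => A.Nonempty),
              ((A.card:ℝ) * (innT p n (fcl n) (PsiT p A))^2) := by rw [Finset.mul_sum]
          _ ≤ ((s n : ℝ)/m) * (C * varT p n) := by
              apply mul_le_mul_of_nonneg_left hw (by positivity)
      rw [rhoT, le_div_iff₀ hvpos]
      have : (1 - C * ((s n:ℝ)/m)) * varT p n
          = varT p n - ((s n : ℝ)/m) * (C * varT p n) := by ring
      rw [this]
      linarith [hdiff]
    have hup : ∀ᶠ n in atTop, rhoT p n (s n) ≤ 1 := by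
      filter_upwards [eventually_ge_atTop 1] with n hn
      obtain ⟨hvpos, _⟩ := hC n hn
      set m : ℝ := (2:ℝ)^(n+1) - 2 with hm
      have hmpos : (0:ℝ) < m := by have := hm2 n hn; linarith
      rw [rhoT, div_le_one hvpos, varT]
      apply Finset.sum_le_sum
      intro A hA
      obtain ⟨hc1, hcm⟩ := hfacts n hn A hA
      have hθ0 : (0:ℝ) ≤ 1 - (A.card:ℝ)/m := by
        rw [sub_nonneg, div_le_one hmpos]; exact hcm
      have hθ1 : 1 - (A.card:ℝ)/m ≤ 1 := by
        have : (0:ℝ) ≤ (A.card:ℝ)/m := by positivity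
        linarith
      calc (innT p n (fcl n) (PsiT p A))^2 * (1 - (A.card:ℝ)/m)^(s n)
          ≤ (innT p n (fcl n) (PsiT p A))^2 * 1 := by
            apply mul_le_mul_of_nonneg_left _ (sq_nonneg _)
            exact pow_le_one₀ hθ0 hθ1
        _ = (innT p n (fcl n) (PsiT p A))^2 := by ring
    have hlowlim : Tendsto (fun n => 1 - C * ((s n : ℝ) / ((2:ℝ)^(n+1) - 2))) atTop (nhds 1) := by
      have h1 : Tendsto (fun n => C * ((s n : ℝ) / ((2:ℝ)^(n+1) - 2))) atTop (nhds (C * 0)) :=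
        hs0.const_mul C
      rw [mul_zero] at h1
      have h2 := h1.const_sub (1:ℝ)
      simpa using h2
    exact tendsto_of_tendsto_of_tendsto_of_le_of_le' hlowlim tendsto_const_nhds hlow hup
  · -- Part 2
    intro hsinf
    have h0 : ∀ᶠ n in atTop, 0 ≤ rhoT p n (s n) := by
      filter_upwards [eventually_ge_atTop 1] with n hn
      obtain ⟨hvpos, _⟩ := hC n hn
      set m : ℝ := (2:ℝ)^(n+1) - 2 with hm
      have hmpos : (0:ℝ) < m := by have := hm2 n hn; linarith
      rw [rhoT]
      apply div_nonneg _ (le_of_lt hvpos)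
      apply Finset.sum_nonneg
      intro A hA
      obtain ⟨hc1, hcm⟩ := hfacts n hn A hA
      have hθ0 : (0:ℝ) ≤ 1 - (A.card:ℝ)/m := by
        rw [sub_nonneg, div_le_one hmpos]; exact hcm
      positivity
    have hup : ∀ᶠ n in atTop, rhoT p n (s n)
        ≤ Real.exp (-((s n : ℝ) / ((2:ℝ)^(n+1) - 2))) := by
      filter_upwards [eventually_ge_atTop 1] with n hn
      obtain ⟨hvpos, _⟩ := hC n hn
      set m : ℝ := (2:ℝ)^(n+1) - 2 with hm
      have hmpos : (0:ℝ) < m := by have := hm2 n hn; linarith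
      have hbound : rhoT p n (s n) ≤ (1 - 1/m)^(s n) := by
        rw [rhoT, div_le_iff₀ hvpos]
        calc (∑ A ∈ (Eset n).powerset.filter (fun A => A.Nonempty),
              (innT p n (fcl n) (PsiT p A))^2 * (1 - (A.card:ℝ)/m)^(s n))
            ≤ ∑ A ∈ (Eset n).powerset.filter (fun A => A.Nonempty),
              (innT p n (fcl n) (PsiT p A))^2 * (1 - 1/m)^(s n) := by
              apply Finset.sum_le_sum
              intro A hA
              obtain ⟨hc1, hcm⟩ := hfacts n hn A hA
              have hθ0 : (0:ℝ) ≤ 1 - (A.card:ℝ)/m := by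
                rw [sub_nonneg, div_le_one hmpos]; exact hcm
              apply mul_le_mul_of_nonneg_left _ (sq_nonneg _)
              apply pow_le_pow_left₀ hθ0
              have : 1/m ≤ (A.card:ℝ)/m := by
                gcongr
                exact_mod_cast hc1
              linarith
          _ = (1 - 1/m)^(s n) * varT p n := by
              rw [varT, Finset.mul_sum]
              apply Finset.sum_congr rfl
              intro A _
              ring
      have hexp : (1 - 1/m)^(s n) ≤ Real.exp (-((s n : ℝ)/m)) := by
        have h1 : 1 - 1/m ≤ Real.exp (-(1/m)) := by
          have := Real.add_one_le_exp (-(1/m))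
          linarith
        have h2 : (0:ℝ) ≤ 1 - 1/m := by
          have : 1/m ≤ 1/2 := one_div_le_one_div_of_le (by norm_num) (hm2 n hn)
          linarith
        calc (1 - 1/m)^(s n) ≤ (Real.exp (-(1/m)))^(s n) := pow_le_pow_left₀ h2 h1 (s n)
          _ = Real.exp (-((s n : ℝ)/m)) := by
              rw [← Real.exp_nat_mul]
              congr 1
              ring
      exact hbound.trans hexp
    have hexplim : Tendsto (fun n => Real.exp (-((s n : ℝ) / ((2:ℝ)^(n+1) - 2))))
        atTop (nhds 0) := by
      apply Real.tendsto_exp_atBot.comp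
      exact tendsto_neg_atBot_iff.mpr hsinf
    exact tendsto_of_tendsto_of_tendsto_of_le_of_le' tendsto_const_nhds hexplim h0 hup


end
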